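/- arXiv:0706.1473 — 8 statements merged into one kernel-verified Lean document; each statement's English description precedes it below -/
import Mathlib

section
/- (Proposition 1, part i.) Assume k ≤ n, assume Φ realizes the k-parameter generalized Stäckel transform generated by H_{s_1},…,H_{s_k}, and assume that for every (x, α̃) ∈ M × ℝᵏ the k×k matrix with entries (∂H_{s_i}/∂α_j)(x, Φ(x, α̃)) is invertible. If { H_{s_i}(·, α), H_{s_j}(·, α) } = 0 on M for all i, j ∈ {1,…,k} and all parameter values α ∈ ℝᵏ, then { Φ_i(·, α̃), Φ_j(·, α̃) } = 0 on M for all i, j ∈ {1,…,k} and all α̃ ∈ ℝᵏ. -/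
open scoped BigOperators

/-- The canonical Poisson bracket on the phase space `M = ℝⁿ × ℝⁿ`. -/
noncomputable def pb {n : ℕ} (f g : ((Fin n → ℝ) × (Fin n → ℝ)) → ℝ)
    (x : (Fin n → ℝ) × (Fin n → ℝ)) : ℝ :=
  ∑ i : Fin n,
    (fderiv ℝ f x (Pi.single i 1, 0) * fderiv ℝ g x (0, Pi.single i 1) -
      fderiv ℝ f x (0, Pi.single i 1) * fderiv ℝ g x (Pi.single i 1, 0))

lemma alg (N k : ℕ) (c d : Fin k → ℝ) (u w : Fin k → Fin N → ℝ)
    (h : ∀ a b, ∑ m, (u a m * w b m - w a m * u b m) = 0) :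
    ∑ m, ((∑ a, c a * u a m) * (∑ b, d b * w b m) -
          (∑ a, c a * w a m) * (∑ b, d b * u b m)) = 0 := by
  have key : ∀ m : Fin N, ((∑ a, c a * u a m) * (∑ b, d b * w b m) -
          (∑ a, c a * w a m) * (∑ b, d b * u b m)) =
      ∑ a, ∑ b, c a * d b * (u a m * w b m - w a m * u b m) := by
    intro m
    rw [Finset.sum_mul_sum, Finset.sum_mul_sum, ← Finset.sum_sub_distrib]
    refine Finset.sum_congr rfl fun a _ => ?_
    rw [← Finset.sum_sub_distrib]
    exact Finset.sum_congr rfl fun b _ => by ring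
  simp only [key]
  rw [Finset.sum_comm]
  refine Finset.sum_eq_zero fun a _ => ?_
  rw [Finset.sum_comm]
  refine Finset.sum_eq_zero fun b _ => ?_
  rw [← Finset.mul_sum, h a b, mul_zero]


/-- Proposition 1, part i: if the generating Hamiltonians
`H_{s_i}` are in involution for all parameter values, then so are the
transformed Hamiltonians `H̃_{s_i} = Φ_i`. -/
theorem stmt_3 {n k r : ℕ} (hkr : k ≤ r) (hkn : k ≤ n)
    (H : Fin r → ((Fin n → ℝ) × (Fin n → ℝ)) → (Fin k → ℝ) → ℝ)
    (hH : ∀ i, ContDiff ℝ (⊤ : ℕ∞)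
      (fun p : ((Fin n → ℝ) × (Fin n → ℝ)) × (Fin k → ℝ) => H i p.1 p.2))
    (s : Fin k → Fin r) (hs : Function.Injective s)
    (Φ : ((Fin n → ℝ) × (Fin n → ℝ)) → (Fin k → ℝ) → Fin k → ℝ)
    (hΦ : ContDiff ℝ (⊤ : ℕ∞)
      (fun p : ((Fin n → ℝ) × (Fin n → ℝ)) × (Fin k → ℝ) => Φ p.1 p.2))
    -- Φ realizes the k-parameter generalized Stäckel transform
    (hreal : ∀ (x : (Fin n → ℝ) × (Fin n → ℝ)) (t : Fin k → ℝ) (i : Fin k),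
      H (s i) x (Φ x t) = t i)
    -- the matrix (∂H_{s_i}/∂α_j)(x, Φ(x, α̃)) is invertible for all (x, α̃)
    (hdet : ∀ (x : (Fin n → ℝ) × (Fin n → ℝ)) (t : Fin k → ℝ),
      (Matrix.of fun i j : Fin k =>
        fderiv ℝ (fun α => H (s i) x α) (Φ x t) (Pi.single j 1)).det ≠ 0)
    -- involutivity of the generating Hamiltonians
    (hinv : ∀ (i j : Fin k) (α : Fin k → ℝ) (x : (Fin n → ℝ) × (Fin n → ℝ)),
      pb (fun y => H (s i) y α) (fun y => H (s j) y α) x = 0)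
    (i j : Fin k) (t : Fin k → ℝ) (x : (Fin n → ℝ) × (Fin n → ℝ)) :
    pb (fun y => Φ y t i) (fun y => Φ y t j) x = 0 := by
  classical
  -- differentiability of y ↦ Φ y t
  have hΦt : Differentiable ℝ (fun y : (Fin n → ℝ) × (Fin n → ℝ) => Φ y t) := by
    exact (hΦ.differentiable (by simp)).comp (differentiable_id.prodMk (differentiable_const t))
  have hΦtx : HasFDerivAt (fun y : (Fin n → ℝ) × (Fin n → ℝ) => Φ y t)
      (fderiv ℝ (fun y : (Fin n → ℝ) × (Fin n → ℝ) => Φ y t) x) x := (hΦt x).hasFDerivAt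
  set DΦ := fderiv ℝ (fun y : (Fin n → ℝ) × (Fin n → ℝ) => Φ y t) x with hDΦdef
  -- projections
  have hPb : ∀ (b : Fin k) (v : (Fin n → ℝ) × (Fin n → ℝ)), fderiv ℝ (fun y => Φ y t b) x v = DΦ v b := by
    intro b v
    have h1 : HasFDerivAt (fun y : (Fin n → ℝ) × (Fin n → ℝ) => Φ y t b)
        ((ContinuousLinearMap.proj b : (Fin k → ℝ) →L[ℝ] ℝ).comp DΦ) x :=
      (ContinuousLinearMap.proj b : (Fin k → ℝ) →L[ℝ] ℝ).hasFDerivAt.comp x hΦtx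
    rw [h1.fderiv]; rfl
  -- chain rule identity
  have hchain : ∀ (a : Fin k) (v : (Fin n → ℝ) × (Fin n → ℝ)),
      fderiv ℝ (fun y => H (s a) y (Φ x t)) x v
        + ∑ b, fderiv ℝ (fun β => H (s a) x β) (Φ x t) (Pi.single b 1)
            * fderiv ℝ (fun y => Φ y t b) x v = 0 := by
    intro a v
    have hDF : HasFDerivAt (fun p : ((Fin n → ℝ) × (Fin n → ℝ)) × (Fin k → ℝ) => H (s a) p.1 p.2)
        (fderiv ℝ (fun p : ((Fin n → ℝ) × (Fin n → ℝ)) × (Fin k → ℝ) => H (s a) p.1 p.2) (x, Φ x t)) (x, Φ x t) :=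
      (((hH (s a)).differentiable (by simp)) (x, Φ x t)).hasFDerivAt
    set DF := fderiv ℝ (fun p : ((Fin n → ℝ) × (Fin n → ℝ)) × (Fin k → ℝ) => H (s a) p.1 p.2) (x, Φ x t) with hDFdef
    -- partial derivative in x
    have hLa : HasFDerivAt (fun y : (Fin n → ℝ) × (Fin n → ℝ) => H (s a) y (Φ x t))
        (DF.comp (ContinuousLinearMap.inl ℝ ((Fin n → ℝ) × (Fin n → ℝ)) (Fin k → ℝ))) x :=
      by have h := hDF.comp x ((hasFDerivAt_id (𝕜 := ℝ) x).prodMk (hasFDerivAt_const (Φ x t) x)); exact h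
    have hLav : fderiv ℝ (fun y : (Fin n → ℝ) × (Fin n → ℝ) => H (s a) y (Φ x t)) x v = DF (v, 0) := by
      rw [hLa.fderiv]; rfl
    -- partial derivative in α
    have hRa : HasFDerivAt (fun β : Fin k → ℝ => H (s a) x β)
        (DF.comp (ContinuousLinearMap.inr ℝ ((Fin n → ℝ) × (Fin n → ℝ)) (Fin k → ℝ))) (Φ x t) :=
      by have h := hDF.comp (Φ x t) ((hasFDerivAt_const (𝕜 := ℝ) x (Φ x t)).prodMk (hasFDerivAt_id (Φ x t))); exact h
    have hRav : ∀ w : Fin k → ℝ,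
        fderiv ℝ (fun β : Fin k → ℝ => H (s a) x β) (Φ x t) w = DF (0, w) := by
      intro w; rw [hRa.fderiv]; rfl
    -- composite is constant
    have hcomp : HasFDerivAt (fun y : (Fin n → ℝ) × (Fin n → ℝ) => H (s a) y (Φ y t))
        (DF.comp ((ContinuousLinearMap.id ℝ ((Fin n → ℝ) × (Fin n → ℝ))).prod DΦ)) x :=
      by have h := hDF.comp x ((hasFDerivAt_id (𝕜 := ℝ) x).prodMk hΦtx); exact h
    have hconst : (fun y : (Fin n → ℝ) × (Fin n → ℝ) => H (s a) y (Φ y t)) = fun _ => t a :=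
      funext fun y => hreal y t a
    rw [hconst] at hcomp
    have hz : DF.comp ((ContinuousLinearMap.id ℝ ((Fin n → ℝ) × (Fin n → ℝ))).prod DΦ) = 0 :=
      hcomp.unique (hasFDerivAt_const (t a) x)
    have hv : DF (v, DΦ v) = 0 := by
      have := ContinuousLinearMap.ext_iff.mp hz v
      simpa using this
    have hsplit : DF (v, DΦ v) = DF (v, 0) + DF (0, DΦ v) := by
      rw [← map_add]; congr 1 <;> simp
    -- decompose second piece
    have hw : DΦ v = ∑ b, DΦ v b • (Pi.single b 1 : Fin k → ℝ) := by
      conv_lhs => rw [← Finset.univ_sum_single (DΦ v)]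
      refine Finset.sum_congr rfl fun b _ => ?_
      rw [← Pi.single_smul, smul_eq_mul, mul_one]
    have hsum : DF (0, DΦ v) = ∑ b, DΦ v b * DF (0, Pi.single b 1) := by
      have h2 : ((0, DΦ v) : ((Fin n → ℝ) × (Fin n → ℝ)) × (Fin k → ℝ))
          = ∑ b, DΦ v b • ((0, Pi.single b 1) : ((Fin n → ℝ) × (Fin n → ℝ)) × (Fin k → ℝ)) := by
        rw [Prod.ext_iff]
        constructor
        · simp [Prod.fst_sum]
        · simp only [Prod.snd_sum, Prod.smul_snd]
          simpa using hw
      rw [h2, map_sum]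
      exact Finset.sum_congr rfl fun b _ => by rw [map_smul]; rfl
    rw [hLav]
    have : ∑ b, fderiv ℝ (fun β => H (s a) x β) (Φ x t) (Pi.single b 1)
            * fderiv ℝ (fun y => Φ y t b) x v
        = ∑ b, DΦ v b * DF (0, Pi.single b 1) := by
      refine Finset.sum_congr rfl fun b _ => ?_
      rw [hRav, hPb]; ring
    rw [this, ← hsum, ← hsplit, hv]
  -- matrix inversion
  set Amat : Matrix (Fin k) (Fin k) ℝ := Matrix.of fun a b : Fin k =>
    fderiv ℝ (fun β => H (s a) x β) (Φ x t) (Pi.single b 1) with hAmat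
  have hACA : Amat⁻¹ * Amat = 1 :=
    Matrix.nonsing_inv_mul Amat (isUnit_iff_ne_zero.mpr (hdet x t))
  have hP : ∀ (i' : Fin k) (v : (Fin n → ℝ) × (Fin n → ℝ)),
      fderiv ℝ (fun y => Φ y t i') x v
        = ∑ a, (-(Amat⁻¹ i' a)) * fderiv ℝ (fun y => H (s a) y (Φ x t)) x v := by
    intro i' v
    have h1 : ∀ a : Fin k, fderiv ℝ (fun y => H (s a) y (Φ x t)) x v
        = -∑ b, Amat a b * fderiv ℝ (fun y => Φ y t b) x v := by
      intro a
      have := hchain a v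
      have hA : ∀ b, Amat a b = fderiv ℝ (fun β => H (s a) x β) (Φ x t) (Pi.single b 1) :=
        fun b => rfl
      simp only [hA]
      linarith
    symm
    calc ∑ a, (-(Amat⁻¹ i' a)) * fderiv ℝ (fun y => H (s a) y (Φ x t)) x v
        = ∑ a, ∑ b, Amat⁻¹ i' a * (Amat a b * fderiv ℝ (fun y => Φ y t b) x v) := by
          refine Finset.sum_congr rfl fun a _ => ?_
          rw [h1 a, ← Finset.mul_sum]; ring
      _ = ∑ b, (∑ a, Amat⁻¹ i' a * Amat a b) * fderiv ℝ (fun y => Φ y t b) x v := by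
          rw [Finset.sum_comm]
          refine Finset.sum_congr rfl fun b _ => ?_
          rw [Finset.sum_mul]
          exact Finset.sum_congr rfl fun a _ => by ring
      _ = ∑ b, (1 : Matrix (Fin k) (Fin k) ℝ) i' b * fderiv ℝ (fun y => Φ y t b) x v := by
          refine Finset.sum_congr rfl fun b _ => ?_
          rw [← Matrix.mul_apply, hACA]
      _ = fderiv ℝ (fun y => Φ y t i') x v := by
          simp [Matrix.one_apply]
  have h0 : ∀ a b : Fin k, ∑ m : Fin n,
      (fderiv ℝ (fun y => H (s a) y (Φ x t)) x (Pi.single m 1, 0)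
          * fderiv ℝ (fun y => H (s b) y (Φ x t)) x (0, Pi.single m 1)
        - fderiv ℝ (fun y => H (s a) y (Φ x t)) x (0, Pi.single m 1)
          * fderiv ℝ (fun y => H (s b) y (Φ x t)) x (Pi.single m 1, 0)) = 0 :=
    fun a b => hinv a b (Φ x t) x
  unfold pb
  simp only [hP]
  exact alg n k (fun a => -(Amat⁻¹ i a)) (fun a => -(Amat⁻¹ j a))
    (fun a m => fderiv ℝ (fun y => H (s a) y (Φ x t)) x (Pi.single m 1, 0))
    (fun a m => fderiv ℝ (fun y => H (s a) y (Φ x t)) x (0, Pi.single m 1)) h0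
end

section
/- (Proposition 1, part ii.) Assume k ≤ n, assume Φ realizes the k-parameter generalized Stäckel transform generated by H_{s_1},…,H_{s_k}, and assume that for every (x, α̃) ∈ M × ℝᵏ the k×k matrix with entries (∂H_{s_i}/∂α_j)(x, Φ(x, α̃)) is invertible. Suppose { H_{s_i}(·, α), H_{s_j}(·, α) } = 0 on M for all i, j ∈ {1,…,k} and all α ∈ ℝᵏ, and suppose there is an index j₀ ∈ {1,…,r} with j₀ ∉ {s_1,…,s_k} such that { H_{s_i}(·, α), H_{j₀}(·, α) } = 0 on M for all i ∈ {1,…,k} and all α ∈ ℝᵏ. Then { Φ_i(·, α̃), H̃_{j₀}(·, α̃) } = 0 on M for all i ∈ {1,…,k} and all α̃ ∈ ℝᵏ, where H̃_{j₀}(x, α̃) = H_{j₀}(x, Φ(x, α̃)). -/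
open scoped BigOperators


lemma aux_sum {ι κ : Type*} [Fintype ι] [Fintype κ] (C : κ → ℝ) (F : κ → ι → ℝ)
    (h : ∀ m, ∑ d : ι, F m d = 0) : ∑ d : ι, ∑ m : κ, C m * F m d = 0 := by
  rw [Finset.sum_comm]
  have : ∀ m : κ, ∑ d : ι, C m * F m d = 0 := by
    intro m; rw [← Finset.mul_sum, h m, mul_zero]
  simp [this]

lemma aux_expand {k : ℕ} {E : Type*} [NormedAddCommGroup E] [NormedSpace ℝ E]
    (D : (E × (Fin k → ℝ)) →L[ℝ] ℝ) (w : Fin k → ℝ) :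
    D (0, w) = ∑ m, w m * D (0, Pi.single m 1) := by
  have hw : w = ∑ m, w m • (Pi.single m (1:ℝ) : Fin k → ℝ) := by
    funext a; simp [Pi.single_apply]
  calc D (0, w) = (D.comp (ContinuousLinearMap.inr ℝ E (Fin k → ℝ)))
        (∑ m, w m • (Pi.single m (1:ℝ) : Fin k → ℝ)) := by rw [← hw]; simp
    _ = ∑ m, w m * D (0, Pi.single m 1) := by
        rw [map_sum]
        refine Finset.sum_congr rfl fun m _ => ?_
        simp [smul_eq_mul]

lemma aux_split {k : ℕ} {E : Type*} [NormedAddCommGroup E] [NormedSpace ℝ E]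
    (D : (E × (Fin k → ℝ)) →L[ℝ] ℝ) (v : E) (w : Fin k → ℝ) :
    D (v, w) = D (v, 0) + D (0, w) := by
  have : ((v, w) : E × (Fin k → ℝ)) = (v, 0) + (0, w) := by simp [Prod.ext_iff]
  rw [this, map_add]

lemma aux_alg {k : ℕ} (a X X' wf we : ℝ) (c : Fin k → ℝ) (γ : Fin k → Fin k → ℝ)
    (uf ue : Fin k → ℝ) :
    (a * X) * (wf + ∑ m, (∑ p, γ m p * uf p) * c m) -
      (a * X') * (we + ∑ m, (∑ p, γ m p * ue p) * c m)
    = a * ((X * wf - X' * we) +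
        ∑ m, c m * ∑ p, γ m p * (X * uf p - X' * ue p)) := by
  have h1 : ∀ m, X * (∑ p, γ m p * uf p) - X' * (∑ p, γ m p * ue p)
      = ∑ p, γ m p * (X * uf p - X' * ue p) := by
    intro m
    rw [Finset.mul_sum, Finset.mul_sum, ← Finset.sum_sub_distrib]
    exact Finset.sum_congr rfl fun p _ => by ring
  have h2 : X * (∑ m, (∑ p, γ m p * uf p) * c m) - X' * (∑ m, (∑ p, γ m p * ue p) * c m)
      = ∑ m, c m * ∑ p, γ m p * (X * uf p - X' * ue p) := by
    rw [Finset.mul_sum, Finset.mul_sum, ← Finset.sum_sub_distrib]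
    refine Finset.sum_congr rfl fun m _ => ?_
    rw [← h1 m]; ring
  rw [← h2]; ring

/-- Proposition 1, part ii: if moreover `H_{j₀}` (with
`j₀ ∉ {s_1,…,s_k}`) commutes with all generating Hamiltonians, then the
transformed `H̃_{j₀}(·, α̃) = H_{j₀}(·, Φ(·, α̃))` commutes with all `Φ_i(·, α̃)`. -/
theorem stmt_4 {n k r : ℕ} (hkr : k ≤ r) (hkn : k ≤ n)
    (H : Fin r → ((Fin n → ℝ) × (Fin n → ℝ)) → (Fin k → ℝ) → ℝ)
    (hH : ∀ i, ContDiff ℝ (⊤ : ℕ∞)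
      (fun p : ((Fin n → ℝ) × (Fin n → ℝ)) × (Fin k → ℝ) => H i p.1 p.2))
    (s : Fin k → Fin r) (hs : Function.Injective s)
    (Φ : ((Fin n → ℝ) × (Fin n → ℝ)) → (Fin k → ℝ) → Fin k → ℝ)
    (hΦ : ContDiff ℝ (⊤ : ℕ∞)
      (fun p : ((Fin n → ℝ) × (Fin n → ℝ)) × (Fin k → ℝ) => Φ p.1 p.2))
    (hreal : ∀ (x : (Fin n → ℝ) × (Fin n → ℝ)) (t : Fin k → ℝ) (i : Fin k),
      H (s i) x (Φ x t) = t i)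
    (hdet : ∀ (x : (Fin n → ℝ) × (Fin n → ℝ)) (t : Fin k → ℝ),
      (Matrix.of fun i j : Fin k =>
        fderiv ℝ (fun α => H (s i) x α) (Φ x t) (Pi.single j 1)).det ≠ 0)
    (hinv : ∀ (i j : Fin k) (α : Fin k → ℝ) (x : (Fin n → ℝ) × (Fin n → ℝ)),
      pb (fun y => H (s i) y α) (fun y => H (s j) y α) x = 0)
    (j₀ : Fin r) (hj₀ : ∀ j : Fin k, s j ≠ j₀)
    (hinv' : ∀ (i : Fin k) (α : Fin k → ℝ) (x : (Fin n → ℝ) × (Fin n → ℝ)),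
      pb (fun y => H (s i) y α) (fun y => H j₀ y α) x = 0)
    (i : Fin k) (t : Fin k → ℝ) (x : (Fin n → ℝ) × (Fin n → ℝ)) :
    pb (fun y => Φ y t i) (fun y => H j₀ y (Φ y t)) x = 0 := by
  classical
  have hHd : ∀ j, Differentiable ℝ
      (fun p : ((Fin n → ℝ) × (Fin n → ℝ)) × (Fin k → ℝ) => H j p.1 p.2) :=
    fun j => (hH j).differentiable (by simp)
  set D : Fin r → ((((Fin n → ℝ) × (Fin n → ℝ)) × (Fin k → ℝ)) →L[ℝ] ℝ) :=
    fun j => fderiv ℝ (fun p => H j p.1 p.2) (x, Φ x t) with hD_def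
  have hD : ∀ j, HasFDerivAt (fun p : ((Fin n → ℝ) × (Fin n → ℝ)) × (Fin k → ℝ) => H j p.1 p.2)
      (D j) (x, Φ x t) := fun j => (hHd j (x, Φ x t)).hasFDerivAt
  obtain ⟨DΦ, hDΦ⟩ : ∃ L : ((Fin n → ℝ) × (Fin n → ℝ)) →L[ℝ] (Fin k → ℝ),
      HasFDerivAt (fun y => Φ y t) L x := by
    have h1 : HasFDerivAt (fun y : (Fin n → ℝ) × (Fin n → ℝ) => (y, t))
        ((ContinuousLinearMap.id ℝ _).prod 0) x :=
      HasFDerivAt.prodMk (hasFDerivAt_id x) (hasFDerivAt_const t x)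
    have h2 := ((hΦ.differentiable (by simp)) (x, t)).hasFDerivAt.comp x h1
    exact ⟨_, h2⟩
  have hG : HasFDerivAt (fun y : (Fin n → ℝ) × (Fin n → ℝ) => (y, Φ y t))
      ((ContinuousLinearMap.id ℝ _).prod DΦ) x := HasFDerivAt.prodMk (hasFDerivAt_id x) hDΦ
  have hp1 : ∀ (j : Fin r) (v : (Fin n → ℝ) × (Fin n → ℝ)),
      fderiv ℝ (fun y => H j y (Φ x t)) x v = D j (v, 0) := by
    intro j v
    have h1 : HasFDerivAt (fun y : (Fin n → ℝ) × (Fin n → ℝ) => (y, Φ x t))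
        ((ContinuousLinearMap.id ℝ _).prod 0) x :=
      HasFDerivAt.prodMk (hasFDerivAt_id x) (hasFDerivAt_const (Φ x t) x)
    have h2 : HasFDerivAt (fun y => H j y (Φ x t))
        ((D j).comp ((ContinuousLinearMap.id ℝ _).prod 0)) x := by have h := (hD j).comp x h1; exact h
    rw [h2.fderiv]; simp
  have hp2 : ∀ (j : Fin r) (w : Fin k → ℝ),
      fderiv ℝ (fun β => H j x β) (Φ x t) w = D j (0, w) := by
    intro j w
    have h1 : HasFDerivAt (fun β : Fin k → ℝ => ((x, β) : _ × _))
        ((0 : (Fin k → ℝ) →L[ℝ] ((Fin n → ℝ) × (Fin n → ℝ))).prod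
          (ContinuousLinearMap.id ℝ _)) (Φ x t) :=
      HasFDerivAt.prodMk (hasFDerivAt_const x (Φ x t)) (hasFDerivAt_id (Φ x t))
    have h2 : HasFDerivAt (fun β => H j x β)
        ((D j).comp ((0 : (Fin k → ℝ) →L[ℝ] ((Fin n → ℝ) × (Fin n → ℝ))).prod
          (ContinuousLinearMap.id ℝ _))) (Φ x t) := by have h := (hD j).comp (Φ x t) h1; exact h
    rw [h2.fderiv]; simp
  set A : Matrix (Fin k) (Fin k) ℝ :=
    Matrix.of (fun l m => D (s l) (0, Pi.single m 1)) with hA_def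
  have hdetA : A.det ≠ 0 := by
    have h := hdet x t
    have heq : (Matrix.of fun l m : Fin k =>
        fderiv ℝ (fun α => H (s l) x α) (Φ x t) (Pi.single m 1)) = A := by
      ext l m; simp [hA_def, hp2]
    rwa [heq] at h
  have hA1 : A⁻¹ * A = 1 := Matrix.nonsing_inv_mul A (Ne.isUnit hdetA)
  have hkey : ∀ (l : Fin k) (v : (Fin n → ℝ) × (Fin n → ℝ)), D (s l) (v, DΦ v) = 0 := by
    intro l v
    have hF : HasFDerivAt (fun y : (Fin n → ℝ) × (Fin n → ℝ) => H (s l) y (Φ y t))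
        ((D (s l)).comp ((ContinuousLinearMap.id ℝ _).prod DΦ)) x := by have h := (hD (s l)).comp x hG; exact h
    have hconst : (fun y : (Fin n → ℝ) × (Fin n → ℝ) => H (s l) y (Φ y t)) = fun _ => t l :=
      funext fun y => hreal y t l
    rw [hconst] at hF
    have h0 : (D (s l)).comp ((ContinuousLinearMap.id ℝ _).prod DΦ) = 0 :=
      hF.unique (hasFDerivAt_const (t l) x)
    have := DFunLike.congr_fun h0 v
    simpa using this
  have hDΦv : ∀ (v : (Fin n → ℝ) × (Fin n → ℝ)) (m : Fin k),
      DΦ v m = ∑ p, (-(A⁻¹ m p)) * D (s p) (v, 0) := by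
    intro v m
    have hmv : A.mulVec (DΦ v) = fun l => -(D (s l) (v, 0)) := by
      funext l
      have h1 := hkey l v
      rw [aux_split, aux_expand] at h1
      have h3 : A.mulVec (DΦ v) l = ∑ m, DΦ v m * D (s l) (0, Pi.single m 1) := by
        simp [Matrix.mulVec, dotProduct, hA_def, mul_comm]
      rw [h3]; linarith
    have h2 : A⁻¹.mulVec (A.mulVec (DΦ v)) = DΦ v := by
      rw [Matrix.mulVec_mulVec, hA1, Matrix.one_mulVec]
    rw [← h2, hmv]
    simp [Matrix.mulVec, dotProduct, mul_neg, neg_mul]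
  have hP : ∀ l : Fin k, ∑ d : Fin n,
      (D (s l) ((Pi.single d 1, 0), 0) * D j₀ ((0, Pi.single d 1), 0) -
        D (s l) ((0, Pi.single d 1), 0) * D j₀ ((Pi.single d 1, 0), 0)) = 0 := by
    intro l
    have h := hinv' l (Φ x t) x
    unfold pb at h
    simpa only [hp1] using h
  have hQ : ∀ l p : Fin k, ∑ d : Fin n,
      (D (s l) ((Pi.single d 1, 0), 0) * D (s p) ((0, Pi.single d 1), 0) -
        D (s l) ((0, Pi.single d 1), 0) * D (s p) ((Pi.single d 1, 0), 0)) = 0 := by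
    intro l p
    have h := hinv l p (Φ x t) x
    unfold pb at h
    simpa only [hp1] using h
  have hΦi : HasFDerivAt (fun y => Φ y t i)
      ((ContinuousLinearMap.proj i : (Fin k → ℝ) →L[ℝ] ℝ).comp DΦ) x :=
    (ContinuousLinearMap.proj i :
      (Fin k → ℝ) →L[ℝ] ℝ).hasFDerivAt.comp x hDΦ
  have htilde : HasFDerivAt (fun y : (Fin n → ℝ) × (Fin n → ℝ) => H j₀ y (Φ y t))
      ((D j₀).comp ((ContinuousLinearMap.id ℝ _).prod DΦ)) x := by have h := (hD j₀).comp x hG; exact h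
  have hg : ∀ v : (Fin n → ℝ) × (Fin n → ℝ),
      D j₀ (v, DΦ v) = D j₀ (v, 0) + ∑ m, DΦ v m * D j₀ (0, Pi.single m 1) := by
    intro v
    rw [aux_split, aux_expand]
  unfold pb
  rw [hΦi.fderiv, htilde.fderiv]
  simp only [ContinuousLinearMap.comp_apply, ContinuousLinearMap.prod_apply,
    ContinuousLinearMap.coe_id', id_eq, ContinuousLinearMap.proj_apply]
  have main : ∀ d : Fin n,
      DΦ (Pi.single d 1, 0) i * D j₀ ((0, Pi.single d 1), DΦ (0, Pi.single d 1)) -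
        DΦ (0, Pi.single d 1) i * D j₀ ((Pi.single d 1, 0), DΦ (Pi.single d 1, 0)) =
      ∑ l, (-(A⁻¹ i l)) *
        ((D (s l) ((Pi.single d 1, 0), 0) * D j₀ ((0, Pi.single d 1), 0) -
            D (s l) ((0, Pi.single d 1), 0) * D j₀ ((Pi.single d 1, 0), 0)) +
          ∑ m, D j₀ (0, Pi.single m 1) * ∑ p, (-(A⁻¹ m p)) *
            (D (s l) ((Pi.single d 1, 0), 0) * D (s p) ((0, Pi.single d 1), 0) -
              D (s l) ((0, Pi.single d 1), 0) * D (s p) ((Pi.single d 1, 0), 0))) := by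
    intro d
    rw [hg (Pi.single d 1, 0), hg (0, Pi.single d 1)]
    simp only [hDΦv]
    rw [Finset.sum_mul, Finset.sum_mul, ← Finset.sum_sub_distrib]
    exact Finset.sum_congr rfl fun l _ =>
      aux_alg (-(A⁻¹ i l)) (D (s l) ((Pi.single d 1, 0), 0))
        (D (s l) ((0, Pi.single d 1), 0)) (D j₀ ((0, Pi.single d 1), 0))
        (D j₀ ((Pi.single d 1, 0), 0)) (fun m => D j₀ (0, Pi.single m 1))
        (fun m p => -(A⁻¹ m p))
        (fun p => D (s p) ((0, Pi.single d 1), 0))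
        (fun p => D (s p) ((Pi.single d 1, 0), 0))
  rw [Finset.sum_congr rfl fun d _ => main d]
  refine aux_sum _ _ fun l => ?_
  rw [Finset.sum_add_distrib, hP l]
  have h2 : ∑ d : Fin n, ∑ m, D j₀ (0, Pi.single m 1) * ∑ p, (-(A⁻¹ m p)) *
      (D (s l) ((Pi.single d 1, 0), 0) * D (s p) ((0, Pi.single d 1), 0) -
        D (s l) ((0, Pi.single d 1), 0) * D (s p) ((Pi.single d 1, 0), 0)) = 0 := by
    refine aux_sum _ _ fun m => ?_
    refine aux_sum _ _ fun p => ?_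
    exact hQ l p
  rw [h2, add_zero]
end

section
/- (Proposition 1, part iii.) Assume Φ realizes the k-parameter generalized Stäckel transform generated by H_{s_1},…,H_{s_k}, and assume that for every (x, α̃) ∈ M × ℝᵏ the k×k matrix with entries (∂H_{s_i}/∂α_j)(x, Φ(x, α̃)) is invertible. Let m ≤ n and let l_1,…,l_m ∈ {1,…,r} be pairwise distinct indices such that {s_1,…,s_k} ⊆ {l_1,…,l_m}. If { H_{l_i}(·, α), H_{l_j}(·, α) } = 0 on M for all i, j ∈ {1,…,m} and all α ∈ ℝᵏ, then { H̃_{l_i}(·, α̃), H̃_{l_j}(·, α̃) } = 0 on M for all i, j ∈ {1,…,m} and all α̃ ∈ ℝᵏ. -/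
open scoped BigOperators

/-- A continuous linear functional on `Fin k → ℝ` applied componentwise. -/
lemma clm_apply_eq_sum {k : ℕ} (L : (Fin k → ℝ) →L[ℝ] ℝ) (w : Fin k → ℝ) :
    L w = ∑ j, w j * L (Pi.single j 1) := by
  have hw : w = ∑ j, (w j) • (Pi.single j (1:ℝ) : Fin k → ℝ) := by
    conv_lhs => rw [← Finset.univ_sum_single w]
    refine Finset.sum_congr rfl fun j _ => ?_
    rw [← Pi.single_smul, smul_eq_mul, mul_one]
  conv_lhs => rw [hw]
  rw [map_sum]
  refine Finset.sum_congr rfl fun j _ => ?_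
  rw [map_smul, smul_eq_mul]

/-- Pure algebra: bilinearity of the Poisson-bracket-like pairing. -/
lemma pb_bilin {n m : ℕ} (G : Fin m → ((Fin n → ℝ) × (Fin n → ℝ)) → ℝ) (c d : Fin m → ℝ)
    (h : ∀ q q' : Fin m, ∑ i : Fin n,
      (G q (Pi.single i 1, 0) * G q' (0, Pi.single i 1) -
       G q (0, Pi.single i 1) * G q' (Pi.single i 1, 0)) = 0) :
    ∑ i : Fin n,
      ((∑ q, c q * G q (Pi.single i 1, 0)) * (∑ q, d q * G q (0, Pi.single i 1)) -
       (∑ q, c q * G q (0, Pi.single i 1)) * (∑ q, d q * G q (Pi.single i 1, 0))) = 0 := by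
  have key : ∀ i : Fin n,
      ((∑ q, c q * G q (Pi.single i 1, 0)) * (∑ q, d q * G q (0, Pi.single i 1)) -
       (∑ q, c q * G q (0, Pi.single i 1)) * (∑ q, d q * G q (Pi.single i 1, 0)))
      = ∑ q, ∑ q', (c q * d q') *
          (G q (Pi.single i 1, 0) * G q' (0, Pi.single i 1) -
           G q (0, Pi.single i 1) * G q' (Pi.single i 1, 0)) := by
    intro i
    rw [Finset.sum_mul_sum, Finset.sum_mul_sum, ← Finset.sum_sub_distrib]
    refine Finset.sum_congr rfl fun q _ => ?_
    rw [← Finset.sum_sub_distrib]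
    refine Finset.sum_congr rfl fun q' _ => ?_
    ring
  simp_rw [key]
  rw [Finset.sum_comm]
  refine Finset.sum_eq_zero fun q _ => ?_
  rw [Finset.sum_comm]
  refine Finset.sum_eq_zero fun q' _ => ?_
  rw [← Finset.mul_sum, h q q', mul_zero]

/-- Proposition 1, part iii: if `H_{l_1},…,H_{l_m}`
(with `{s_1,…,s_k} ⊆ {l_1,…,l_m}`, `m ≤ n`) are in involution for all
parameter values, then so are the transformed Hamiltonians
`H̃_{l_1},…,H̃_{l_m}`, where `H̃_{s_j} = Φ_j` and `H̃_i(x,α̃) = H_i(x,Φ(x,α̃))`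
for `i ∉ {s_1,…,s_k}`. -/
theorem stmt_5 {n k r m : ℕ} (hkr : k ≤ r) (hmn : m ≤ n)
    (H : Fin r → ((Fin n → ℝ) × (Fin n → ℝ)) → (Fin k → ℝ) → ℝ)
    (hH : ∀ i, ContDiff ℝ (⊤ : ℕ∞)
      (fun p : ((Fin n → ℝ) × (Fin n → ℝ)) × (Fin k → ℝ) => H i p.1 p.2))
    (s : Fin k → Fin r) (hs : Function.Injective s)
    (Φ : ((Fin n → ℝ) × (Fin n → ℝ)) → (Fin k → ℝ) → Fin k → ℝ)
    (hΦ : ContDiff ℝ (⊤ : ℕ∞)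
      (fun p : ((Fin n → ℝ) × (Fin n → ℝ)) × (Fin k → ℝ) => Φ p.1 p.2))
    (hreal : ∀ (x : (Fin n → ℝ) × (Fin n → ℝ)) (t : Fin k → ℝ) (i : Fin k),
      H (s i) x (Φ x t) = t i)
    (hdet : ∀ (x : (Fin n → ℝ) × (Fin n → ℝ)) (t : Fin k → ℝ),
      (Matrix.of fun i j : Fin k =>
        fderiv ℝ (fun α => H (s i) x α) (Φ x t) (Pi.single j 1)).det ≠ 0)
    -- the transformed Hamiltonians
    (Ht : Fin r → ((Fin n → ℝ) × (Fin n → ℝ)) → (Fin k → ℝ) → ℝ)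
    (hHt1 : ∀ (j : Fin k) (x : (Fin n → ℝ) × (Fin n → ℝ)) (t : Fin k → ℝ),
      Ht (s j) x t = Φ x t j)
    (hHt2 : ∀ i : Fin r, (∀ j : Fin k, s j ≠ i) →
      ∀ (x : (Fin n → ℝ) × (Fin n → ℝ)) (t : Fin k → ℝ), Ht i x t = H i x (Φ x t))
    -- the indices l_1,…,l_m
    (l : Fin m → Fin r) (hl : Function.Injective l)
    (hsl : Set.range s ⊆ Set.range l)
    -- involutivity of H_{l_1},…,H_{l_m}
    (hinv : ∀ (i j : Fin m) (α : Fin k → ℝ) (x : (Fin n → ℝ) × (Fin n → ℝ)),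
      pb (fun y => H (l i) y α) (fun y => H (l j) y α) x = 0)
    (i j : Fin m) (t : Fin k → ℝ) (x : (Fin n → ℝ) × (Fin n → ℝ)) :
    pb (fun y => Ht (l i) y t) (fun y => Ht (l j) y t) x = 0 := by
  classical
  set α₀ := Φ x t with hα₀
  -- derivative of y ↦ Φ y t
  have hΦdiff : DifferentiableAt ℝ (fun y : (Fin n → ℝ) × (Fin n → ℝ) => Φ y t) x := by
    have hcomp : (fun y : (Fin n → ℝ) × (Fin n → ℝ) => Φ y t)
        = (fun p : ((Fin n → ℝ) × (Fin n → ℝ)) × (Fin k → ℝ) => Φ p.1 p.2) ∘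
          (fun y : (Fin n → ℝ) × (Fin n → ℝ) => (y, t)) := rfl
    rw [hcomp]
    exact DifferentiableAt.comp x
      ((hΦ.differentiable (by simp)) (x, t))
      (differentiableAt_fun_id.prodMk (differentiableAt_const t))
  set D : ((Fin n → ℝ) × (Fin n → ℝ)) →L[ℝ] (Fin k → ℝ) :=
    fderiv ℝ (fun y : (Fin n → ℝ) × (Fin n → ℝ) => Φ y t) x with hDdef
  have hD : HasFDerivAt (fun y : (Fin n → ℝ) × (Fin n → ℝ) => Φ y t) D x :=
    hΦdiff.hasFDerivAt
  -- partial gradients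
  set G : Fin r → ((Fin n → ℝ) × (Fin n → ℝ)) → ℝ :=
    fun a v => fderiv ℝ (fun y => H a y α₀) x v with hGdef
  set P : Fin r → Fin k → ℝ :=
    fun a q => fderiv ℝ (fun α => H a x α) α₀ (Pi.single q 1) with hPdef
  -- chain rule
  have chain : ∀ (a : Fin r) (v : (Fin n → ℝ) × (Fin n → ℝ)),
      fderiv ℝ (fun y => H a y (Φ y t)) x v = G a v + ∑ q, (D v q) * P a q := by
    intro a v
    set L := fderiv ℝ (fun p : ((Fin n → ℝ) × (Fin n → ℝ)) × (Fin k → ℝ) =>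
      H a p.1 p.2) (x, α₀) with hL
    have hFa : HasFDerivAt (fun p : ((Fin n → ℝ) × (Fin n → ℝ)) × (Fin k → ℝ) =>
        H a p.1 p.2) L (x, α₀) :=
      (((hH a).differentiable (by simp)) (x, α₀)).hasFDerivAt
    have hψ : HasFDerivAt (fun y : (Fin n → ℝ) × (Fin n → ℝ) => (y, Φ y t))
        ((ContinuousLinearMap.id ℝ ((Fin n → ℝ) × (Fin n → ℝ))).prod D) x :=
      (hasFDerivAt_id x).prodMk hD
    have hcomp : HasFDerivAt (fun y : (Fin n → ℝ) × (Fin n → ℝ) => H a y (Φ y t))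
        (L.comp ((ContinuousLinearMap.id ℝ ((Fin n → ℝ) × (Fin n → ℝ))).prod D)) x :=
      HasFDerivAt.comp (g := fun p : ((Fin n → ℝ) × (Fin n → ℝ)) × (Fin k → ℝ) => H a p.1 p.2) x hFa hψ
    rw [hcomp.fderiv]
    have hpart1 : HasFDerivAt (fun y : (Fin n → ℝ) × (Fin n → ℝ) => H a y α₀)
        (L.comp (ContinuousLinearMap.inl ℝ ((Fin n → ℝ) × (Fin n → ℝ)) (Fin k → ℝ))) x :=
      HasFDerivAt.comp (g := fun p : ((Fin n → ℝ) × (Fin n → ℝ)) × (Fin k → ℝ) => H a p.1 p.2) x hFa (hasFDerivAt_prodMk_left (𝕜 := ℝ) x α₀)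
    have hpart2 : HasFDerivAt (fun α => H a x α)
        (L.comp (ContinuousLinearMap.inr ℝ ((Fin n → ℝ) × (Fin n → ℝ)) (Fin k → ℝ))) α₀ :=
      HasFDerivAt.comp (g := fun p : ((Fin n → ℝ) × (Fin n → ℝ)) × (Fin k → ℝ) => H a p.1 p.2) α₀ hFa (hasFDerivAt_prodMk_right (𝕜 := ℝ) x α₀)
    have hGa : G a v = L (v, 0) := by
      show fderiv ℝ (fun y => H a y α₀) x v = L (v, 0)
      rw [hpart1.fderiv]
      simp
    have hPa : ∀ q, P a q = L (0, Pi.single q 1) := by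
      intro q
      show fderiv ℝ (fun α => H a x α) α₀ (Pi.single q 1) = L (0, Pi.single q 1)
      rw [hpart2.fderiv]
      simp
    have hsnd : L ((0 : (Fin n → ℝ) × (Fin n → ℝ)), D v) = ∑ q, (D v q) * P a q := by
      have hq := clm_apply_eq_sum
        (L.comp (ContinuousLinearMap.inr ℝ ((Fin n → ℝ) × (Fin n → ℝ)) (Fin k → ℝ))) (D v)
      simp only [ContinuousLinearMap.comp_apply, ContinuousLinearMap.inr_apply] at hq
      rw [hq]
      exact Finset.sum_congr rfl fun q _ => by rw [hPa q]
    have hsplit : L ((v, D v) : ((Fin n → ℝ) × (Fin n → ℝ)) × (Fin k → ℝ))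
        = L (v, 0) + L (0, D v) := by
      rw [← map_add]
      congr 1
      simp
    calc (L.comp ((ContinuousLinearMap.id ℝ ((Fin n → ℝ) × (Fin n → ℝ))).prod D)) v
        = L (v, D v) := rfl
      _ = L (v, 0) + L (0, D v) := hsplit
      _ = G a v + ∑ q, (D v q) * P a q := by rw [hGa, hsnd]
  -- the matrix A
  set A : Matrix (Fin k) (Fin k) ℝ := Matrix.of (fun b q : Fin k =>
      fderiv ℝ (fun α => H (s b) x α) α₀ (Pi.single q 1)) with hAdef
  have hAP : ∀ b q, A b q = P (s b) q := fun b q => rfl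
  have hAdet : IsUnit A.det := by
    have hd := hdet x t
    rw [← hα₀] at hd
    exact hd.isUnit
  -- derivative of composed H_{s b} vanishes
  have hzero : ∀ (b : Fin k) (v : (Fin n → ℝ) × (Fin n → ℝ)),
      G (s b) v + ∑ q, (D v q) * P (s b) q = 0 := by
    intro b v
    have hconst : (fun y : (Fin n → ℝ) × (Fin n → ℝ) => H (s b) y (Φ y t))
        = fun _ => t b := by
      funext y; exact hreal y t b
    have hc := chain (s b) v
    rw [hconst] at hc
    simp only [fderiv_fun_const, Pi.zero_apply, ContinuousLinearMap.zero_apply] at hc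
    linarith
  -- solve for D
  have hDsolve : ∀ (v : (Fin n → ℝ) × (Fin n → ℝ)) (q : Fin k),
      D v q = ∑ b, (A⁻¹ q b) * (-(G (s b) v)) := by
    intro v q
    have hmv : A.mulVec (fun q' => D v q') = fun b => -(G (s b) v) := by
      funext b
      have h0 := hzero b v
      simp only [Matrix.mulVec, dotProduct]
      have he : ∑ q', A b q' * D v q' = ∑ q', (D v q') * P (s b) q' :=
        Finset.sum_congr rfl fun q' _ => by rw [hAP, mul_comm]
      rw [he]
      linarith
    have h1 := congrArg (fun u => A⁻¹.mulVec u) hmv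
    simp only [Matrix.mulVec_mulVec, Matrix.nonsing_inv_mul A hAdet,
      Matrix.one_mulVec] at h1
    have h2 := congrFun h1 q
    rw [h2]
    simp [Matrix.mulVec, dotProduct]
  -- choose σ with l ∘ σ = s
  have hσex : ∀ b : Fin k, ∃ p : Fin m, l p = s b := fun b => hsl ⟨b, rfl⟩
  choose σ hσ using hσex
  -- every transformed Hamiltonian has x-gradient a combination of the G (l q)
  have key : ∀ p : Fin m, ∃ c : Fin m → ℝ, ∀ v : (Fin n → ℝ) × (Fin n → ℝ),
      fderiv ℝ (fun y => Ht (l p) y t) x v = ∑ q, c q * G (l q) v := by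
    intro p
    by_cases hp : ∃ b, s b = l p
    · obtain ⟨b₀, hb₀⟩ := hp
      have hfun : (fun y : (Fin n → ℝ) × (Fin n → ℝ) => Ht (l p) y t)
          = fun y => Φ y t b₀ := by
        funext y; rw [← hb₀, hHt1]
      refine ⟨fun q => ∑ b, if σ b = q then -(A⁻¹ b₀ b) else 0, fun v => ?_⟩
      have hproj : HasFDerivAt (fun y : (Fin n → ℝ) × (Fin n → ℝ) => Φ y t b₀)
          ((ContinuousLinearMap.proj b₀).comp D) x := by
        exact ((ContinuousLinearMap.proj b₀).hasFDerivAt).comp x hD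
      rw [hfun, hproj.fderiv]
      have hlhs : ((ContinuousLinearMap.proj b₀).comp D) v = D v b₀ := rfl
      rw [hlhs, hDsolve v b₀]
      have hrhs : ∀ q : Fin m, (∑ b, if σ b = q then -(A⁻¹ b₀ b) else 0) * G (l q) v
          = ∑ b, if σ b = q then -(A⁻¹ b₀ b) * G (l q) v else 0 := by
        intro q
        rw [Finset.sum_mul]
        exact Finset.sum_congr rfl fun b _ => by rw [ite_mul, zero_mul]
      simp_rw [hrhs]
      rw [Finset.sum_comm]
      refine Finset.sum_congr rfl fun b _ => ?_
      have hcollect : (∑ q, if σ b = q then -(A⁻¹ b₀ b) * G (l q) v else 0)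
          = -(A⁻¹ b₀ b) * G (l (σ b)) v := by
        rw [Finset.sum_ite_eq]
        simp
      rw [hcollect, hσ b]
      ring
    · push_neg at hp
      have hfun : (fun y : (Fin n → ℝ) × (Fin n → ℝ) => Ht (l p) y t)
          = fun y => H (l p) y (Φ y t) := by
        funext y; rw [hHt2 (l p) hp]
      refine ⟨fun q => (if p = q then 1 else 0) +
        ∑ b, if σ b = q then -(∑ q', A⁻¹ q' b * P (l p) q') else 0, fun v => ?_⟩
      rw [hfun, chain (l p) v]
      have h2 : ∑ q, D v q * P (l p) q
          = ∑ b, (-(∑ q, A⁻¹ q b * P (l p) q)) * G (s b) v := by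
        simp_rw [hDsolve v, Finset.sum_mul]
        rw [Finset.sum_comm]
        refine Finset.sum_congr rfl fun b _ => ?_
        rw [neg_mul, Finset.sum_mul, ← Finset.sum_neg_distrib]
        exact Finset.sum_congr rfl fun q _ => by ring
      rw [h2]
      have h3 : (∑ q, ((if p = q then 1 else 0) +
            ∑ b, if σ b = q then -(∑ q', A⁻¹ q' b * P (l p) q') else 0) * G (l q) v)
          = G (l p) v + ∑ b, (-(∑ q, A⁻¹ q b * P (l p) q)) * G (s b) v := by
        simp_rw [add_mul, Finset.sum_add_distrib]
        congr 1
        · simp_rw [ite_mul, zero_mul, one_mul]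
          rw [Finset.sum_ite_eq]
          simp
        · simp_rw [Finset.sum_mul, ite_mul, zero_mul]
          rw [Finset.sum_comm]
          refine Finset.sum_congr rfl fun b _ => ?_
          rw [Finset.sum_ite_eq]
          simp [hσ b]
      rw [h3]
  obtain ⟨c, hc⟩ := key i
  obtain ⟨d, hd⟩ := key j
  simp only [pb]
  simp_rw [hc, hd]
  refine pb_bilin (fun q => G (l q)) c d fun q q' => ?_
  have hqq := hinv q q' α₀ x
  simpa [pb, hGdef] using hqq
end

section
/- (Preservation of functional independence, pointwise form.) Assume Φ realizes the k-parameter generalized Stäckel transform generated by H_{s_1},…,H_{s_k}. Fix x ∈ M and α̃ ∈ ℝᵏ, set a := Φ(x, α̃), and denote by d_x f the differential of a function in the phase-space variables x with parameters held fixed. Suppose the k×k matrix with entries (∂H_{s_i}/∂α_j)(x, a) is invertible, and suppose the covectors d_x H_1(·, a)(x),…, d_x H_r(·, a)(x) are linearly independent. Then the covectors d_x H̃_1(·, α̃)(x),…, d_x H̃_r(·, α̃)(x) are linearly independent, where H̃_{s_i}(·, α̃) = Φ_i(·, α̃) and H̃_i(·, α̃) = H_i(·, Φ(·, α̃)) for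 i ∉ {s_1,…,s_k}. -/
open scoped BigOperators

/-- Preservation of functional independence, pointwise form:
if at `x` the differentials `d_x H_i(·,a)` (with `a = Φ(x,α̃)`) are linearly
independent and the matrix `(∂H_{s_i}/∂α_j)(x,a)` is invertible, then the
differentials `d_x H̃_i(·,α̃)` of the transformed Hamiltonians are linearly
independent. -/
theorem stmt_8 {n k r : ℕ} (hkr : k ≤ r)
    (H : Fin r → ((Fin n → ℝ) × (Fin n → ℝ)) → (Fin k → ℝ) → ℝ)
    (hH : ∀ i, ContDiff ℝ (⊤ : ℕ∞)
      (fun p : ((Fin n → ℝ) × (Fin n → ℝ)) × (Fin k → ℝ) => H i p.1 p.2))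
    (s : Fin k → Fin r) (hs : Function.Injective s)
    (Φ : ((Fin n → ℝ) × (Fin n → ℝ)) → (Fin k → ℝ) → Fin k → ℝ)
    (hΦ : ContDiff ℝ (⊤ : ℕ∞)
      (fun p : ((Fin n → ℝ) × (Fin n → ℝ)) × (Fin k → ℝ) => Φ p.1 p.2))
    (hreal : ∀ (x : (Fin n → ℝ) × (Fin n → ℝ)) (t : Fin k → ℝ) (i : Fin k),
      H (s i) x (Φ x t) = t i)
    -- the transformed Hamiltonians
    (Ht : Fin r → ((Fin n → ℝ) × (Fin n → ℝ)) → (Fin k → ℝ) → ℝ)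
    (hHt1 : ∀ (j : Fin k) (x : (Fin n → ℝ) × (Fin n → ℝ)) (t : Fin k → ℝ),
      Ht (s j) x t = Φ x t j)
    (hHt2 : ∀ i : Fin r, (∀ j : Fin k, s j ≠ i) →
      ∀ (x : (Fin n → ℝ) × (Fin n → ℝ)) (t : Fin k → ℝ), Ht i x t = H i x (Φ x t))
    (x : (Fin n → ℝ) × (Fin n → ℝ)) (t : Fin k → ℝ)
    -- the matrix (∂H_{s_i}/∂α_j)(x, a) is invertible at a = Φ(x,t)
    (hdet : (Matrix.of fun i j : Fin k =>
      fderiv ℝ (fun α => H (s i) x α) (Φ x t) (Pi.single j 1)).det ≠ 0)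
    -- linear independence of the differentials of the original Hamiltonians
    (hli : LinearIndependent ℝ (fun i : Fin r => fderiv ℝ (fun y => H i y (Φ x t)) x)) :
    LinearIndependent ℝ (fun i : Fin r => fderiv ℝ (fun y => Ht i y t) x) := by
  classical
  have hΦd : Differentiable ℝ (fun y : (Fin n → ℝ) × (Fin n → ℝ) => Φ y t) :=
    (hΦ.differentiable (by simp)).comp (g := fun p : ((Fin n → ℝ) × (Fin n → ℝ)) × (Fin k → ℝ) => Φ p.1 p.2)
      (differentiable_id.prodMk (differentiable_const t))
  set DΦ : ((Fin n → ℝ) × (Fin n → ℝ)) →L[ℝ] (Fin k → ℝ) :=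
    fderiv ℝ (fun y : (Fin n → ℝ) × (Fin n → ℝ) => Φ y t) x with hDΦdef
  have hDΦ : HasFDerivAt (fun y : (Fin n → ℝ) × (Fin n → ℝ) => Φ y t) DΦ x := (hΦd x).hasFDerivAt
  set DH : Fin r → (((Fin n → ℝ) × (Fin n → ℝ)) × (Fin k → ℝ)) →L[ℝ] ℝ := fun i =>
    fderiv ℝ (fun p : ((Fin n → ℝ) × (Fin n → ℝ)) × (Fin k → ℝ) => H i p.1 p.2) (x, Φ x t)
    with hDHdef
  have hDH : ∀ i, HasFDerivAt (fun p : ((Fin n → ℝ) × (Fin n → ℝ)) × (Fin k → ℝ) => H i p.1 p.2)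
      (DH i) (x, Φ x t) :=
    fun i => ((hH i).differentiable (by simp) (x, Φ x t)).hasFDerivAt
  set v : Fin r → (((Fin n → ℝ) × (Fin n → ℝ)) →L[ℝ] ℝ) := fun i =>
    fderiv ℝ (fun y => H i y (Φ x t)) x with hvdef
  set w : Fin r → (((Fin n → ℝ) × (Fin n → ℝ)) →L[ℝ] ℝ) := fun i =>
    fderiv ℝ (fun y => Ht i y t) x with hwdef
  set dphi : Fin k → (((Fin n → ℝ) × (Fin n → ℝ)) →L[ℝ] ℝ) := fun j =>
    fderiv ℝ (fun y : (Fin n → ℝ) × (Fin n → ℝ) => Φ y t j) x with hdphidef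
  set c : Fin r → Fin k → ℝ := fun i j =>
    fderiv ℝ (fun α => H i x α) (Φ x t) (Pi.single j 1) with hcdef
  have hvx : ∀ i, HasFDerivAt (fun y : (Fin n → ℝ) × (Fin n → ℝ) => H i y (Φ x t))
      ((DH i).comp (ContinuousLinearMap.inl ℝ ((Fin n → ℝ) × (Fin n → ℝ)) (Fin k → ℝ))) x :=
    fun i => HasFDerivAt.comp (g := fun p : ((Fin n → ℝ) × (Fin n → ℝ)) × (Fin k → ℝ) => H i p.1 p.2) x (hDH i) (hasFDerivAt_prodMk_left (𝕜 := ℝ) x (Φ x t))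
  have hvα : ∀ i, HasFDerivAt (fun α => H i x α)
      ((DH i).comp (ContinuousLinearMap.inr ℝ ((Fin n → ℝ) × (Fin n → ℝ)) (Fin k → ℝ))) (Φ x t) :=
    fun i => HasFDerivAt.comp (g := fun p : ((Fin n → ℝ) × (Fin n → ℝ)) × (Fin k → ℝ) => H i p.1 p.2) (Φ x t) (hDH i) (hasFDerivAt_prodMk_right (𝕜 := ℝ) x (Φ x t))
  have hv : ∀ i, v i = (DH i).comp (ContinuousLinearMap.inl ℝ ((Fin n → ℝ) × (Fin n → ℝ)) (Fin k → ℝ)) :=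
    fun i => (hvx i).fderiv
  have hc : ∀ i j, c i j = DH i (0, Pi.single j 1) := by
    intro i j
    simp only [hcdef]
    rw [(hvα i).fderiv]
    rfl
  have hdphi : ∀ j, dphi j = (ContinuousLinearMap.proj j).comp DΦ := by
    intro j
    exact (((ContinuousLinearMap.proj j : (Fin k → ℝ) →L[ℝ] ℝ).hasFDerivAt).comp x hDΦ).fderiv
  have hsecond : ∀ i (m : Fin k → ℝ),
      DH i ((0 : (Fin n → ℝ) × (Fin n → ℝ)), m) = ∑ j, m j * DH i (0, Pi.single j 1) := by
    intro i m
    have hm : m = ∑ j, m j • (Pi.single j 1 : Fin k → ℝ) := by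
      simp [← Pi.single_smul, Finset.univ_sum_single]
    calc DH i ((0 : (Fin n → ℝ) × (Fin n → ℝ)), m)
        = ((DH i).comp (ContinuousLinearMap.inr ℝ ((Fin n → ℝ) × (Fin n → ℝ)) (Fin k → ℝ))) m := rfl
      _ = ((DH i).comp (ContinuousLinearMap.inr ℝ ((Fin n → ℝ) × (Fin n → ℝ)) (Fin k → ℝ)))
            (∑ j, m j • (Pi.single j 1 : Fin k → ℝ)) := by rw [← hm]
      _ = ∑ j, m j * DH i (0, Pi.single j 1) := by
          rw [map_sum]
          exact Finset.sum_congr rfl fun j _ => by rw [map_smul]; rfl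
  have hchain : ∀ i, fderiv ℝ (fun y => H i y (Φ y t)) x = v i + ∑ j, c i j • dphi j := by
    intro i
    have hcomp : HasFDerivAt (fun y : (Fin n → ℝ) × (Fin n → ℝ) => H i y (Φ y t))
        ((DH i).comp ((ContinuousLinearMap.id ℝ ((Fin n → ℝ) × (Fin n → ℝ))).prod DΦ)) x :=
      HasFDerivAt.comp (g := fun p : ((Fin n → ℝ) × (Fin n → ℝ)) × (Fin k → ℝ) => H i p.1 p.2) x (hDH i) ((hasFDerivAt_id x).prodMk hDΦ)
    rw [hcomp.fderiv]
    refine ContinuousLinearMap.ext fun h => ?_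
    have hLHS : ((DH i).comp ((ContinuousLinearMap.id ℝ ((Fin n → ℝ) × (Fin n → ℝ))).prod DΦ)) h
        = DH i (h, 0) + DH i (0, DΦ h) := by
      have : ((h : (Fin n → ℝ) × (Fin n → ℝ)), DΦ h)
          = ((h, (0 : Fin k → ℝ)) + ((0 : (Fin n → ℝ) × (Fin n → ℝ)), DΦ h)) := by simp
      calc ((DH i).comp ((ContinuousLinearMap.id ℝ ((Fin n → ℝ) × (Fin n → ℝ))).prod DΦ)) h
          = DH i (h, DΦ h) := rfl
        _ = DH i ((h, (0 : Fin k → ℝ)) + ((0 : (Fin n → ℝ) × (Fin n → ℝ)), DΦ h)) := by rw [← this]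
        _ = DH i (h, 0) + DH i (0, DΦ h) := map_add _ _ _
    rw [hLHS, hsecond i (DΦ h)]
    have hRHS : (v i + ∑ j, c i j • dphi j) h = v i h + ∑ j, c i j * dphi j h := by
      simp [ContinuousLinearMap.sum_apply]
    rw [hRHS, hv i]
    congr 1
    refine Finset.sum_congr rfl fun j _ => ?_
    rw [hc i j, hdphi j]
    simp only [ContinuousLinearMap.coe_comp', Function.comp_apply,
      ContinuousLinearMap.proj_apply]
    ring
  have hrel : ∀ i : Fin k, v (s i) + ∑ j, c (s i) j • dphi j = 0 := by
    intro i
    have hconstf : (fun y : (Fin n → ℝ) × (Fin n → ℝ) => H (s i) y (Φ y t)) = fun _ => t i :=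
      funext fun y => hreal y t i
    have h0 := hchain (s i)
    rw [hconstf, fderiv_fun_const] at h0
    exact h0.symm
  have hws : ∀ j : Fin k, w (s j) = dphi j := by
    intro j
    have : (fun y : (Fin n → ℝ) × (Fin n → ℝ) => Ht (s j) y t) = fun y => Φ y t j :=
      funext fun y => hHt1 j y t
    simp only [hwdef, hdphidef, this]
  have hvmem : ∀ i : Fin r, v i ∈ Submodule.span ℝ (Set.range w) := by
    intro i
    by_cases hcase : ∃ j, s j = i
    · obtain ⟨j, rfl⟩ := hcase
      have h1 : v (s j) = -(∑ m, c (s j) m • w (s m)) := by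
        rw [eq_neg_of_add_eq_zero_left (hrel j)]
        congr 1
        exact Finset.sum_congr rfl fun m _ => by rw [hws m]
      rw [h1]
      exact Submodule.neg_mem _ (Submodule.sum_mem _ fun m _ => Submodule.smul_mem _ _
        (Submodule.subset_span ⟨s m, rfl⟩))
    · push_neg at hcase
      have heq : (fun y : (Fin n → ℝ) × (Fin n → ℝ) => Ht i y t) = fun y => H i y (Φ y t) :=
        funext fun y => hHt2 i hcase y t
      have hw : w i = v i + ∑ j, c i j • dphi j := by
        simp only [hwdef, heq]; exact hchain i
      have hsum : ∑ j, c i j • dphi j = ∑ j, c i j • w (s j) :=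
        Finset.sum_congr rfl fun j _ => by rw [hws j]
      have h1 : v i = w i - ∑ j, c i j • w (s j) := by
        rw [← hsum, hw]; abel
      rw [h1]
      exact Submodule.sub_mem _ (Submodule.subset_span ⟨i, rfl⟩)
        (Submodule.sum_mem _ fun m _ => Submodule.smul_mem _ _
          (Submodule.subset_span ⟨s m, rfl⟩))
  haveI : FiniteDimensional ℝ (Submodule.span ℝ (Set.range w)) :=
    FiniteDimensional.span_of_finite ℝ (Set.finite_range w)
  have hle : Submodule.span ℝ (Set.range v) ≤ Submodule.span ℝ (Set.range w) :=
    Submodule.span_le.mpr (Set.range_subset_iff.mpr hvmem)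
  have h1 : Fintype.card (Fin r) = (Set.range v).finrank ℝ :=
    linearIndependent_iff_card_eq_finrank_span.mp hli
  exact linearIndependent_iff_card_le_finrank_span.mpr
    (h1.le.trans (Submodule.finrank_mono hle))
end

section
/- (Proposition 3, core vector-field identity.) Assume Φ realizes the k-parameter generalized Stäckel transform generated by H_{s_1},…,H_{s_k}, and assume that for every x ∈ M the map α ↦ (H_{s_1}(x,α),…,H_{s_k}(x,α)) from ℝᵏ to ℝᵏ is injective. Fix α, α̃ ∈ ℝᵏ and let x ∈ M satisfy H_{s_i}(x, α) = α̃_i for all i = 1,…,k. Then for every i ∈ {1,…,k} the Hamiltonian vector fields satisfy X_{H_{s_i}(·,α)}(x) = − Σ_{j=1}^k (∂H_{s_i}/∂α_j)(x, Φ(x, α̃)) · X_{Φ_j(·,α̃)}(x). -/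
open scoped BigOperators

/-- The Hamiltonian vector field of `f` with respect to the canonical symplectic
structure on `M = ℝⁿ × ℝⁿ`: `X_f = (∂f/∂p, −∂f/∂q)`. -/
noncomputable def ham {n : ℕ} (f : ((Fin n → ℝ) × (Fin n → ℝ)) → ℝ)
    (x : (Fin n → ℝ) × (Fin n → ℝ)) : (Fin n → ℝ) × (Fin n → ℝ) :=
  (fun i => fderiv ℝ f x (0, Pi.single i 1),
   fun i => -fderiv ℝ f x (Pi.single i 1, 0))

/-- Proposition 3, core vector-field identity: on the common
level surface `H_{s_i}(x,α) = α̃_i`, one has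
`X_{H_{s_i}(·,α)}(x) = −∑_j (∂H_{s_i}/∂α_j)(x,Φ(x,α̃)) · X_{Φ_j(·,α̃)}(x)`. -/
theorem stmt_10 {n k r : ℕ} (hkr : k ≤ r)
    (H : Fin r → ((Fin n → ℝ) × (Fin n → ℝ)) → (Fin k → ℝ) → ℝ)
    (hH : ∀ i, ContDiff ℝ (⊤ : ℕ∞)
      (fun p : ((Fin n → ℝ) × (Fin n → ℝ)) × (Fin k → ℝ) => H i p.1 p.2))
    (s : Fin k → Fin r) (hs : Function.Injective s)
    (Φ : ((Fin n → ℝ) × (Fin n → ℝ)) → (Fin k → ℝ) → Fin k → ℝ)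
    (hΦ : ContDiff ℝ (⊤ : ℕ∞)
      (fun p : ((Fin n → ℝ) × (Fin n → ℝ)) × (Fin k → ℝ) => Φ p.1 p.2))
    (hreal : ∀ (x : (Fin n → ℝ) × (Fin n → ℝ)) (t : Fin k → ℝ) (i : Fin k),
      H (s i) x (Φ x t) = t i)
    (hinj : ∀ x : (Fin n → ℝ) × (Fin n → ℝ),
      Function.Injective (fun α : Fin k → ℝ => fun i : Fin k => H (s i) x α))
    (α t : Fin k → ℝ) (x : (Fin n → ℝ) × (Fin n → ℝ))
    (hx : ∀ i : Fin k, H (s i) x α = t i)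
    (i : Fin k) :
    ham (fun y => H (s i) y α) x =
      -∑ j : Fin k,
        fderiv ℝ (fun β => H (s i) x β) (Φ x t) (Pi.single j 1) •
          ham (fun y => Φ y t j) x := by
  classical
  have hα : Φ x t = α := by
    apply hinj x
    funext j
    simp only
    rw [hreal x t j, hx j]
  subst hα
  have hD : HasFDerivAt (fun p : ((Fin n → ℝ) × (Fin n → ℝ)) × (Fin k → ℝ) => H (s i) p.1 p.2)
      (fderiv ℝ (fun p : ((Fin n → ℝ) × (Fin n → ℝ)) × (Fin k → ℝ) => H (s i) p.1 p.2) (x, Φ x t))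
      (x, Φ x t) :=
    (((hH (s i)).differentiable (by simp)) (x, Φ x t)).hasFDerivAt
  set D := fderiv ℝ (fun p : ((Fin n → ℝ) × (Fin n → ℝ)) × (Fin k → ℝ) => H (s i) p.1 p.2) (x, Φ x t) with hDdef
  have hΨdiff : Differentiable ℝ (fun y : (Fin n → ℝ) × (Fin n → ℝ) => Φ y t) :=
    (hΦ.differentiable (by simp)).comp
      ((differentiable_id.prodMk (differentiable_const t)) :
        Differentiable ℝ (fun y : (Fin n → ℝ) × (Fin n → ℝ) => (y, t)))
  set P := fderiv ℝ (fun y : (Fin n → ℝ) × (Fin n → ℝ) => Φ y t) x with hPdef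
  have hP : HasFDerivAt (fun y : (Fin n → ℝ) × (Fin n → ℝ) => Φ y t) P x := (hΨdiff x).hasFDerivAt
  have hG : HasFDerivAt (fun y : (Fin n → ℝ) × (Fin n → ℝ) => (y, Φ y t))
      ((ContinuousLinearMap.id ℝ ((Fin n → ℝ) × (Fin n → ℝ))).prod P) x := (hasFDerivAt_id x).prodMk hP
  have hF : HasFDerivAt (fun y : (Fin n → ℝ) × (Fin n → ℝ) => H (s i) y (Φ y t))
      (D.comp ((ContinuousLinearMap.id ℝ ((Fin n → ℝ) × (Fin n → ℝ))).prod P)) x := hD.comp (f := fun y : (Fin n → ℝ) × (Fin n → ℝ) => (y, Φ y t)) x hG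
  have hconst : (fun y : (Fin n → ℝ) × (Fin n → ℝ) => H (s i) y (Φ y t)) =
      fun _ : (Fin n → ℝ) × (Fin n → ℝ) => t i :=
    funext fun y => hreal y t i
  rw [hconst] at hF
  have hz : D.comp ((ContinuousLinearMap.id ℝ ((Fin n → ℝ) × (Fin n → ℝ))).prod P) = 0 :=
    hF.unique (hasFDerivAt_const (t i) x)
  have hq : HasFDerivAt (fun y : (Fin n → ℝ) × (Fin n → ℝ) => H (s i) y (Φ x t))
      (D.comp ((ContinuousLinearMap.id ℝ ((Fin n → ℝ) × (Fin n → ℝ))).prod 0)) x :=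
    hD.comp (f := fun y : (Fin n → ℝ) × (Fin n → ℝ) => (y, Φ x t)) x ((hasFDerivAt_id x).prodMk (hasFDerivAt_const (Φ x t) x))
  have hβ : HasFDerivAt (fun β => H (s i) x β)
      (D.comp ((0 : (Fin k → ℝ) →L[ℝ] ((Fin n → ℝ) × (Fin n → ℝ))).prod
        (ContinuousLinearMap.id ℝ (Fin k → ℝ)))) (Φ x t) :=
    hD.comp (f := fun β : Fin k → ℝ => (x, β)) (Φ x t) ((hasFDerivAt_const x (Φ x t)).prodMk (hasFDerivAt_id (Φ x t)))
  have hqf : fderiv ℝ (fun y : (Fin n → ℝ) × (Fin n → ℝ) => H (s i) y (Φ x t)) x =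
      D.comp ((ContinuousLinearMap.id ℝ ((Fin n → ℝ) × (Fin n → ℝ))).prod 0) := hq.fderiv
  have hβf : fderiv ℝ (fun β => H (s i) x β) (Φ x t) =
      D.comp ((0 : (Fin k → ℝ) →L[ℝ] ((Fin n → ℝ) × (Fin n → ℝ))).prod
        (ContinuousLinearMap.id ℝ (Fin k → ℝ))) := hβ.fderiv
  have hPj : ∀ (j : Fin k), fderiv ℝ (fun y : (Fin n → ℝ) × (Fin n → ℝ) => Φ y t j) x =
      (ContinuousLinearMap.proj j).comp P := by
    intro j
    exact (((ContinuousLinearMap.proj j : (Fin k → ℝ) →L[ℝ] ℝ).hasFDerivAt).comp x hP).fderiv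
  have key : ∀ v : (Fin n → ℝ) × (Fin n → ℝ),
      fderiv ℝ (fun y : (Fin n → ℝ) × (Fin n → ℝ) => H (s i) y (Φ x t)) x v =
      -∑ j : Fin k, fderiv ℝ (fun β => H (s i) x β) (Φ x t) (Pi.single j 1) *
        fderiv ℝ (fun y : (Fin n → ℝ) × (Fin n → ℝ) => Φ y t j) x v := by
    intro v
    have h0 : D (v, P v) = 0 := by
      have := congrArg (fun L : ((Fin n → ℝ) × (Fin n → ℝ)) →L[ℝ] ℝ => L v) hz
      simpa using this
    have hsplit : D (v, P v) = D (v, 0) + D (0, P v) := by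
      rw [← map_add]
      congr 1
      simp
    have hPv : (P v : Fin k → ℝ) = ∑ j : Fin k, (P v j) • (Pi.single j (1 : ℝ) : Fin k → ℝ) := by
      funext m
      simp [Pi.single_apply, Finset.sum_apply, mul_comm]
    have hsum : D (0, P v) = ∑ j : Fin k, (P v j) * D (0, (Pi.single j (1 : ℝ) : Fin k → ℝ)) := by
      conv_lhs => rw [hPv]
      have hpair : ((0 : (Fin n → ℝ) × (Fin n → ℝ)),
            ∑ j : Fin k, (P v j) • (Pi.single j (1 : ℝ) : Fin k → ℝ)) =
          ∑ j : Fin k, (P v j) •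
            ((0 : (Fin n → ℝ) × (Fin n → ℝ)), (Pi.single j (1 : ℝ) : Fin k → ℝ)) := by
        rw [Prod.ext_iff]
        constructor
        · simp [Prod.fst_sum]
        · simp [Prod.snd_sum]
      rw [hpair, map_sum]
      refine Finset.sum_congr rfl fun j _ => ?_
      rw [map_smul, smul_eq_mul]
    have hqv : fderiv ℝ (fun y : (Fin n → ℝ) × (Fin n → ℝ) => H (s i) y (Φ x t)) x v =
        D (v, 0) := by
      rw [hqf]; simp
    have hβv : ∀ j : Fin k, fderiv ℝ (fun β => H (s i) x β) (Φ x t) (Pi.single j 1) =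
        D (0, (Pi.single j (1 : ℝ) : Fin k → ℝ)) := by
      intro j; rw [hβf]; simp
    have hPjv : ∀ j : Fin k, fderiv ℝ (fun y : (Fin n → ℝ) × (Fin n → ℝ) => Φ y t j) x v =
        P v j := by
      intro j; rw [hPj j]; simp
    rw [hqv]
    have hneg : D (v, 0) = -D (0, P v) := by linarith [hsplit, h0]
    rw [hneg, hsum]
    congr 1
    refine Finset.sum_congr rfl fun j _ => ?_
    rw [hβv j, hPjv j, mul_comm]
  refine Prod.ext ?_ ?_
  · funext m
    show fderiv ℝ (fun y : (Fin n → ℝ) × (Fin n → ℝ) => H (s i) y (Φ x t)) x (0, Pi.single m 1) = _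
    rw [key]
    simp [ham, Prod.fst_sum, Finset.sum_apply]
  · funext m
    show -fderiv ℝ (fun y : (Fin n → ℝ) × (Fin n → ℝ) => H (s i) y (Φ x t)) x (Pi.single m 1, 0) = _
    rw [key]
    simp [ham, Prod.snd_sum, Finset.sum_apply, mul_neg]
end

section
/- (Proposition 5: common complete integral of the Hamilton–Jacobi equations.) Let M = ℝⁿ × ℝⁿ with points (λ, μ). Assume Φ realizes the k-parameter generalized Stäckel transform generated by H_{s_1},…,H_{s_k}, with k ≤ r ≤ n, and assume that for every x ∈ M the map α ↦ (H_{s_1}(x,α),…,H_{s_k}(x,α)) from ℝᵏ to ℝᵏ is injective. Let U ⊆ ℝⁿ be open, let S : U → ℝ be smooth, and suppose that for given α ∈ ℝᵏ and E ∈ ℝʳ one has H_i(λ, ∇S(λ), α) = E_i for all λ ∈ U and i = 1,…,r. Define α̃_j := E_{s_j} and Ẽ_{s_j} := α_j for j = 1,…,k, and Ẽ_i := E_i for i ∉ {s_1,…,s_k}. Then H̃_i(λ, ∇S(λ), α̃) = Ẽ_i for all λ ∈ U and i = 1,…,r, where H̃_{s_j} = Φ_j and H̃_i(x, α̃) = H_i(x,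 Φ(x, α̃)) for i ∉ {s_1,…,s_k}. -/
open scoped BigOperators

/-- Proposition 5: common complete integral of the Hamilton–Jacobi
equations: if `S` solves `H_i(λ, ∇S(λ), α) = E_i` on `U` for `i = 1,…,r`, then,
setting `α̃_j := E_{s_j}`, `Ẽ_{s_j} := α_j` and `Ẽ_i := E_i` otherwise,
`S` solves `H̃_i(λ, ∇S(λ), α̃) = Ẽ_i` on `U` for `i = 1,…,r`. -/
theorem stmt_13 {n k r : ℕ} (hkr : k ≤ r) (hrn : r ≤ n)
    (H : Fin r → ((Fin n → ℝ) × (Fin n → ℝ)) → (Fin k → ℝ) → ℝ)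
    (hH : ∀ i, ContDiff ℝ (⊤ : ℕ∞)
      (fun p : ((Fin n → ℝ) × (Fin n → ℝ)) × (Fin k → ℝ) => H i p.1 p.2))
    (s : Fin k → Fin r) (hs : Function.Injective s)
    (Φ : ((Fin n → ℝ) × (Fin n → ℝ)) → (Fin k → ℝ) → Fin k → ℝ)
    (hΦ : ContDiff ℝ (⊤ : ℕ∞)
      (fun p : ((Fin n → ℝ) × (Fin n → ℝ)) × (Fin k → ℝ) => Φ p.1 p.2))
    (hreal : ∀ (x : (Fin n → ℝ) × (Fin n → ℝ)) (t : Fin k → ℝ) (i : Fin k),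
      H (s i) x (Φ x t) = t i)
    (hinj : ∀ x : (Fin n → ℝ) × (Fin n → ℝ),
      Function.Injective (fun α : Fin k → ℝ => fun i : Fin k => H (s i) x α))
    -- the transformed Hamiltonians
    (Ht : Fin r → ((Fin n → ℝ) × (Fin n → ℝ)) → (Fin k → ℝ) → ℝ)
    (hHt1 : ∀ (j : Fin k) (x : (Fin n → ℝ) × (Fin n → ℝ)) (t : Fin k → ℝ),
      Ht (s j) x t = Φ x t j)
    (hHt2 : ∀ i : Fin r, (∀ j : Fin k, s j ≠ i) →
      ∀ (x : (Fin n → ℝ) × (Fin n → ℝ)) (t : Fin k → ℝ), Ht i x t = H i x (Φ x t))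
    -- a solution S of the stationary Hamilton–Jacobi equations on an open set U
    (U : Set (Fin n → ℝ)) (hU : IsOpen U)
    (S : (Fin n → ℝ) → ℝ) (hS : ContDiffOn ℝ (⊤ : ℕ∞) S U)
    (α : Fin k → ℝ) (E : Fin r → ℝ)
    (hHJ : ∀ lam ∈ U, ∀ i : Fin r,
      H i (lam, fun j => fderiv ℝ S lam (Pi.single j 1)) α = E i)
    -- the transformed energies Ẽ
    (Et : Fin r → ℝ)
    (hEt1 : ∀ j : Fin k, Et (s j) = α j)
    (hEt2 : ∀ i : Fin r, (∀ j : Fin k, s j ≠ i) → Et i = E i) :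
    ∀ lam ∈ U, ∀ i : Fin r,
      Ht i (lam, fun j => fderiv ℝ S lam (Pi.single j 1)) (fun j => E (s j)) = Et i := by
  intro lam hlam i
  set x : (Fin n → ℝ) × (Fin n → ℝ) :=
    (lam, fun j => fderiv ℝ S lam (Pi.single j 1)) with hx
  have hΦα : Φ x (fun j => E (s j)) = α := by
    apply hinj x
    funext j
    simp only [hreal]
    exact (hHJ lam hlam (s j)).symm
  by_cases hi : ∃ j : Fin k, s j = i
  · obtain ⟨j, rfl⟩ := hi
    rw [hHt1, hΦα, hEt1]
  · push_neg at hi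
    rw [hHt2 i hi, hΦα, hEt2 i hi]
    exact hHJ lam hlam i
end

section
/- (Proposition 6: deformation of separation curves.) Let λ_1,…,λ_n be pairwise distinct real numbers, and for a non-negative integer m let V_1^{(m)},…,V_n^{(m)} be the unique reals satisfying λ_i^m + Σ_{p=1}^n V_p^{(m)} λ_i^{n−p} = 0 for i = 1,…,n. Let ψ_1,…,ψ_n ∈ ℝ, let α_1,…,α_k ∈ ℝ, let γ_1,…,γ_k be pairwise distinct integers with γ_j > n−1, let s_1,…,s_k ∈ {1,…,n} be pairwise distinct indices, and let H_1^{(0)},…,H_n^{(0)} ∈ ℝ. Set H_p := H_p^{(0)} + Σ_{j=1}^k α_j V_p^{(γ_j)} for p = 1,…,n, and assume the separation relations Σ_{j=1}^k α_j λ_i^{γ_j} + Σ_{p=1}^n H_p λ_i^{n−p} = ψ_i hold for i = 1,…,n. Let α̃_1,…,α̃_k ∈ ℝ and suppose H̃_{s_1},…,H̃_{s_k} ∈ ℝ satisfy H_{s_i}^{(0)} + Σ_{j=1}^k H̃_{s_j} V_{s_i}^{(γ_j)} = α̃_i for i = 1,…,k; define H̃_p := H_p^{(0)} + Σ_{j=1}^k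 H̃_{s_j} V_p^{(γ_j)} for p ∈ {1,…,n} \ {s_1,…,s_k}. Then the deformed separation relations Σ_{j=1}^k H̃_{s_j} λ_i^{γ_j} + Σ_{p ∉ {s_1,…,s_k}} H̃_p λ_i^{n−p} + Σ_{j=1}^k α̃_j λ_i^{n−s_j} = ψ_i hold for all i = 1,…,n. -/
open scoped BigOperators

/-- Proposition 6: deformation of separation curves.
Indices `p ∈ {1,…,n}` are modelled by `p : Fin n`, with `λ^{n−p}` becoming
`λ ^ (n - 1 - p.val)`. The basic separable potentials `V_p⁽ᵐ⁾` satisfy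
`λ_i^m + ∑_p V_p⁽ᵐ⁾ λ_i^{n−p} = 0`. If the separation relations
`∑_j α_j λ_i^{γ_j} + ∑_p H_p λ_i^{n−p} = ψ_i` hold for the Hamiltonians
`H_p = H_p⁽⁰⁾ + ∑_j α_j V_p^{(γ_j)}`, and `H̃_{s_1},…,H̃_{s_k}` solve
`H_{s_i}⁽⁰⁾ + ∑_j H̃_{s_j} V_{s_i}^{(γ_j)} = α̃_i`, with
`H̃_p = H_p⁽⁰⁾ + ∑_j H̃_{s_j} V_p^{(γ_j)}` for `p ∉ {s_1,…,s_k}`, then the deformed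
separation relations
`∑_j H̃_{s_j} λ_i^{γ_j} + ∑_{p ∉ {s₁,…,s_k}} H̃_p λ_i^{n−p} + ∑_j α̃_j λ_i^{n−s_j} = ψ_i`
hold. -/
theorem stmt_14 {n k : ℕ}
    (lam : Fin n → ℝ) (hlam : Function.Injective lam)
    (V : ℕ → Fin n → ℝ)
    (hV : ∀ (m : ℕ) (i : Fin n),
      lam i ^ m + ∑ p : Fin n, V m p * lam i ^ (n - 1 - (p : ℕ)) = 0)
    (ψ : Fin n → ℝ) (α : Fin k → ℝ)
    (γ : Fin k → ℕ) (hγ : Function.Injective γ) (hγn : ∀ j, n - 1 < γ j)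
    (s : Fin k → Fin n) (hs : Function.Injective s)
    (H0 : Fin n → ℝ)
    (H : Fin n → ℝ)
    (hH : ∀ p : Fin n, H p = H0 p + ∑ j : Fin k, α j * V (γ j) p)
    (hsep : ∀ i : Fin n,
      (∑ j : Fin k, α j * lam i ^ γ j) +
        ∑ p : Fin n, H p * lam i ^ (n - 1 - (p : ℕ)) = ψ i)
    (αt : Fin k → ℝ) (Hts : Fin k → ℝ)
    (hHts : ∀ i : Fin k,
      H0 (s i) + ∑ j : Fin k, Hts j * V (γ j) (s i) = αt i)
    (Htp : Fin n → ℝ)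
    (hHtp : ∀ p : Fin n, (∀ j : Fin k, s j ≠ p) →
      Htp p = H0 p + ∑ j : Fin k, Hts j * V (γ j) p) :
    ∀ i : Fin n,
      (∑ j : Fin k, Hts j * lam i ^ γ j) +
        (∑ p ∈ (Finset.univ.image s)ᶜ, Htp p * lam i ^ (n - 1 - (p : ℕ))) +
        (∑ j : Fin k, αt j * lam i ^ (n - 1 - ((s j : Fin n) : ℕ))) = ψ i := by
  intro i
  have hpow : ∀ m : ℕ, lam i ^ m = -∑ p : Fin n, V m p * lam i ^ (n - 1 - (p : ℕ)) := by
    intro m; have := hV m i; linarith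
  have key : ∀ c : Fin k → ℝ,
      ∑ j : Fin k, c j * lam i ^ γ j
        = -∑ p : Fin n, (∑ j : Fin k, c j * V (γ j) p) * lam i ^ (n - 1 - (p : ℕ)) := by
    intro c
    rw [show (∑ j : Fin k, c j * lam i ^ γ j)
        = ∑ j : Fin k, c j * (-∑ p : Fin n, V (γ j) p * lam i ^ (n - 1 - (p : ℕ)))
      from Finset.sum_congr rfl fun j _ => by rw [hpow (γ j)]]
    simp only [mul_neg, Finset.mul_sum, ← Finset.sum_neg_distrib]
    rw [Finset.sum_comm]
    refine Finset.sum_congr rfl fun p _ => ?_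
    rw [Finset.sum_mul, ← Finset.sum_neg_distrib]
    exact Finset.sum_congr rfl fun j _ => by ring
  have h3 : (∑ j : Fin k, αt j * lam i ^ (n - 1 - ((s j : Fin n) : ℕ)))
      = ∑ p ∈ Finset.univ.image s,
          (H0 p + ∑ j : Fin k, Hts j * V (γ j) p) * lam i ^ (n - 1 - (p : ℕ)) := by
    rw [Finset.sum_image (fun a _ b _ h => hs h)]
    exact Finset.sum_congr rfl fun j _ => by rw [hHts j]
  have h2 : (∑ p ∈ (Finset.univ.image s)ᶜ, Htp p * lam i ^ (n - 1 - (p : ℕ)))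
      = ∑ p ∈ (Finset.univ.image s)ᶜ,
          (H0 p + ∑ j : Fin k, Hts j * V (γ j) p) * lam i ^ (n - 1 - (p : ℕ)) := by
    refine Finset.sum_congr rfl fun p hp => ?_
    rw [hHtp p fun j hj =>
      (Finset.mem_compl.mp hp) (Finset.mem_image.mpr ⟨j, Finset.mem_univ j, hj⟩)]
  have hψ : ψ i = ∑ p : Fin n, H0 p * lam i ^ (n - 1 - (p : ℕ)) := by
    rw [← hsep i, key α]
    simp only [hH]
    rw [neg_add_eq_sub, ← Finset.sum_sub_distrib]
    exact Finset.sum_congr rfl fun p _ => by ring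
  rw [h2, h3, add_assoc, add_comm (∑ p ∈ (Finset.univ.image s)ᶜ, _),
    Finset.sum_add_sum_compl, key Hts, neg_add_eq_sub, ← Finset.sum_sub_distrib, hψ]
  exact Finset.sum_congr rfl fun p _ => by ring
end

section
/- (Example 2: separation curve of the extended Hénon–Heiles system.) Let α₁, α₂ ∈ ℝ, let λ₁, λ₂ ∈ ℝ satisfy λ₁ λ₂ < 0 and λ₁ ≠ λ₂, and let μ₁, μ₂ ∈ ℝ. Define q₁ = λ₁ + λ₂, q₂ = 2 √(−λ₁ λ₂), p₁ = λ₁ μ₁/(λ₁ − λ₂) + λ₂ μ₂/(λ₂ − λ₁), p₂ = √(−λ₁ λ₂) ( μ₁/(λ₁ − λ₂) + μ₂/(λ₂ − λ₁) ), and set H₁ = ½ p₁² + ½ p₂² − α₁ (q₁³ + q₁ q₂²/2) − α₂ q₁ and H₂ = ½ q₂ p₁ p₂ − ½ q₁ p₂² − α₁ (q₂⁴/16 + q₁² q₂²/4) − α₂ q₂²/4. Then for each i ∈ {1, 2} the separation relation α₁ λ_i⁴ + α₂ λ_i² + H₁ λ_i + H₂ = λ_i μ_i²/2 holds. -/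
/-- Example 2: separation curve of the extended Hénon–Heiles
system: with `q₁ = λ₁ + λ₂`, `q₂ = 2√(−λ₁λ₂)`,
`p₁ = λ₁μ₁/(λ₁−λ₂) + λ₂μ₂/(λ₂−λ₁)`, `p₂ = √(−λ₁λ₂)(μ₁/(λ₁−λ₂) + μ₂/(λ₂−λ₁))`,
and the extended Hénon–Heiles Hamiltonians `H₁`, `H₂`, the separation relations
`α₁λᵢ⁴ + α₂λᵢ² + H₁λᵢ + H₂ = λᵢμᵢ²/2` hold for `i = 1, 2`. -/
theorem stmt_19 (α₁ α₂ l₁ l₂ μ₁ μ₂ : ℝ)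
    (hneg : l₁ * l₂ < 0) (hne : l₁ ≠ l₂)
    (q₁ q₂ p₁ p₂ H₁ H₂ : ℝ)
    (hq₁ : q₁ = l₁ + l₂)
    (hq₂ : q₂ = 2 * Real.sqrt (-(l₁ * l₂)))
    (hp₁ : p₁ = l₁ * μ₁ / (l₁ - l₂) + l₂ * μ₂ / (l₂ - l₁))
    (hp₂ : p₂ = Real.sqrt (-(l₁ * l₂)) * (μ₁ / (l₁ - l₂) + μ₂ / (l₂ - l₁)))
    (hH₁ : H₁ = (1/2) * p₁^2 + (1/2) * p₂^2 -
      α₁ * (q₁^3 + q₁ * q₂^2 / 2) - α₂ * q₁)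
    (hH₂ : H₂ = (1/2) * q₂ * p₁ * p₂ - (1/2) * q₁ * p₂^2 -
      α₁ * (q₂^4 / 16 + q₁^2 * q₂^2 / 4) - α₂ * q₂^2 / 4) :
    α₁ * l₁^4 + α₂ * l₁^2 + H₁ * l₁ + H₂ = l₁ * μ₁^2 / 2 ∧
      α₁ * l₂^4 + α₂ * l₂^2 + H₁ * l₂ + H₂ = l₂ * μ₂^2 / 2 := by
  have hd : l₁ - l₂ ≠ 0 := sub_ne_zero.mpr hne
  have hd' : l₂ - l₁ ≠ 0 := sub_ne_zero.mpr (Ne.symm hne)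
  set s := Real.sqrt (-(l₁ * l₂)) with hsdef
  have hs : s ^ 2 = -(l₁ * l₂) := Real.sq_sqrt (by linarith)
  have hs4 : s ^ 4 = (l₁ * l₂) ^ 2 := by
    have : s ^ 4 = (s ^ 2) ^ 2 := by ring
    rw [this, hs]; ring
  set a := μ₁ / (l₁ - l₂) with hadef
  set b := μ₂ / (l₂ - l₁) with hbdef
  have ha : μ₁ = a * (l₁ - l₂) := (div_mul_cancel₀ μ₁ hd).symm
  have hb : μ₂ = b * (l₂ - l₁) := (div_mul_cancel₀ μ₂ hd').symm
  have hp₁' : p₁ = l₁ * a + l₂ * b := by rw [hp₁, hadef, hbdef]; ring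
  have hp₂' : p₂ = s * (a + b) := by rw [hp₂]
  subst hq₁ hq₂ hH₁ hH₂
  rw [hp₁', hp₂', ha, hb]
  constructor
  · linear_combination ((1/2) * (a+b)^2 * l₁ - 2*α₁*(l₁+l₂)*l₁
      + (l₁*a + l₂*b)*(a+b) - (1/2)*(l₁+l₂)*(a+b)^2 - α₁*(l₁+l₂)^2 - α₂) * hs
      + (-α₁) * hs4
  · linear_combination ((1/2) * (a+b)^2 * l₂ - 2*α₁*(l₁+l₂)*l₂
      + (l₁*a + l₂*b)*(a+b) - (1/2)*(l₁+l₂)*(a+b)^2 - α₁*(l₁+l₂)^2 - α₂) * hs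
      + (-α₁) * hs4
end
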